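/- Let G be a finite abelian group with |G| ≥ 3. If S is a zero-sum free sequence over G of length |S| = D(G) - 1, then the set of subsequence sums Σ(S) equals G \ {0}. -/

import Mathlib

open Multiset

/-- A minimal zero-sum sequence over `G`: a nonempty zero-sum sequence with no
proper nonempty zero-sum subsequence. -/
def IsMinZeroSum {G : Type*} [AddCommGroup G] (S : Multiset G) : Prop :=
  S ≠ 0 ∧ S.sum = 0 ∧ ∀ T : Multiset G, T ≤ S → T ≠ 0 → T ≠ S → T.sum ≠ 0

/-- The Davenport constant of `G`: the maximal length of a minimal zero-sum
sequence over `G`. -/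
noncomputable def DavenportConstant (G : Type*) [AddCommGroup G] : ℕ :=
  sSup {n : ℕ | ∃ S : Multiset G, IsMinZeroSum S ∧ Multiset.card S = n}

/-- The set of lengths of a zero-sum sequence `A`: the set of all `k` such that
`A` can be written as a product of `k` minimal zero-sum sequences. -/
def LengthsSet {G : Type*} [AddCommGroup G] (A : Multiset G) : Set ℕ :=
  {k : ℕ | ∃ f : Multiset (Multiset G), Multiset.card f = k ∧
    (∀ S ∈ f, IsMinZeroSum S) ∧ f.sum = A}

/-- A factorization of a zero-sum sequence `A` into minimal zero-sum sequences. -/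
def IsFactorization {G : Type*} [AddCommGroup G] (A : Multiset G)
    (z : Multiset (Multiset G)) : Prop :=
  (∀ S ∈ z, IsMinZeroSum S) ∧ z.sum = A

/-- The distance between two factorizations. -/
def factDist {G : Type*} [AddCommGroup G] [DecidableEq G]
    (z z' : Multiset (Multiset G)) : ℕ :=
  max (Multiset.card (z - z')) (Multiset.card (z' - z))

/-- The catenary degree of the monoid of zero-sum sequences over `G`: the smallest
`N` such that any two factorizations of an element can be connected by a chain of
factorizations in which consecutive members have distance at most `N`. -/
noncomputable def CatenaryDegree (G : Type*) [AddCommGroup G] [DecidableEq G] : ℕ :=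
  sInf {N : ℕ | ∀ (A : Multiset G) (z z' : Multiset (Multiset G)),
    IsFactorization A z → IsFactorization A z' →
    Relation.ReflTransGen (fun x y => IsFactorization A y ∧ factDist x y ≤ N) z z'}

/-- The invariant `ℸ(G) = sup { min (L \ {2}) : 2 ∈ L ∈ 𝓛(G) }`. -/
noncomputable def Daleth (G : Type*) [AddCommGroup G] : ℕ :=
  sSup {m : ℕ | ∃ A : Multiset G, A.sum = 0 ∧ 2 ∈ LengthsSet A ∧
    (LengthsSet A \ {2}).Nonempty ∧ m = sInf (LengthsSet A \ {2})}

/-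
If `g ≠ 0` were not a subsequence sum of `S`, then `(-g) ::ₘ S` would still be zero-sum free, of length
`D(G)`. Completing a zero-sum free sequence `T` by the element `-σ(T)` gives a minimal zero-sum
sequence, here of length `D(G) + 1`, which is impossible. That `D(G)` is finite at all comes from
the pigeonhole principle on the prefix sums of a zero-sum free sequence.
-/

section

variable {G : Type*} [AddCommGroup G]

def ZeroSumFree (S : Multiset G) : Prop :=
  ∀ T ≤ S, T ≠ 0 → T.sum ≠ 0

theorem zeroSumFree_cons_iff {a : G} {S : Multiset G} :
    ZeroSumFree (a ::ₘ S) ↔ ZeroSumFree S ∧ ∀ T ≤ S, a + T.sum ≠ 0 := by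
  constructor
  · intro h
    refine ⟨fun T hT => h T (hT.trans (le_cons_self S a)), fun T hT => ?_⟩
    simpa using h (a ::ₘ T) ((cons_le_cons_iff a).2 hT) cons_ne_zero
  · rintro ⟨hS, ha⟩ U hU hU0
    by_cases hmem : a ∈ U
    · obtain ⟨T, rfl⟩ := exists_cons_of_mem hmem
      simpa using ha T ((cons_le_cons_iff a).1 hU)
    · exact hS U ((le_cons_of_notMem hmem).1 hU) hU0

/-- The pigeonhole principle on the prefix sums `0, s₁, s₁ + s₂, …`: two equal ones would bound
a nonempty zero-sum block. -/
theorem ZeroSumFree.card_lt_card [Fintype G] {S : Multiset G} (h : ZeroSumFree S) :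
    card S < Fintype.card G := by
  induction S using Quotient.inductionOn with
  | h l =>
  let prefixSum : Fin (l.length + 1) → G := fun i => (l.take i).sum
  have hinj : Function.Injective prefixSum := by
    refine Function.Injective.of_lt_imp_ne fun i j hij hEq => ?_
    have hij : (i : ℕ) < j := hij
    have hsplit : l.take i ++ (l.take j).drop i = l.take j := by
      simpa [List.take_take, min_eq_left hij.le] using List.take_append_drop (i : ℕ) (l.take j)
    have hblock : ((l.take j).drop i).sum = 0 := by
      have := congrArg List.sum hsplit
      rw [List.sum_append] at this
      exact left_eq_add.1 (this.trans hEq.symm).symm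
    have hlen : ((l.take j).drop i).length = j - i := by
      simp only [List.length_drop, List.length_take]
      omega
    refine h _ (coe_le.2 ((List.drop_sublist _ _).trans (List.take_sublist _ _)).subperm) ?_ hblock
    rw [Ne, ← card_eq_zero, coe_card, hlen]
    omega
  simpa using Fintype.card_le_of_injective prefixSum hinj

theorem IsMinZeroSum.card_le_card [Fintype G] {S : Multiset G} (h : IsMinZeroSum S) :
    card S ≤ Fintype.card G := by
  obtain ⟨a, T, rfl⟩ : ∃ a T, S = a ::ₘ T := by
    obtain ⟨a, ha⟩ := exists_mem_of_ne_zero h.1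
    exact ⟨a, exists_cons_of_mem ha⟩
  have hT : ZeroSumFree T := fun U hU hU0 =>
    h.2.2 U (hU.trans (le_cons_self T a)) hU0
      (fun hEq => by simpa [hEq] using Multiset.card_le_card hU)
  simpa using hT.card_lt_card

theorem IsMinZeroSum.card_le_davenportConstant [Fintype G] {S : Multiset G}
    (h : IsMinZeroSum S) : card S ≤ DavenportConstant G :=
  le_csSup ⟨Fintype.card G, fun _ ⟨_, hT, hcard⟩ => hcard ▸ hT.card_le_card⟩ ⟨S, h, rfl⟩

theorem ZeroSumFree.isMinZeroSum_cons_neg_sum {S : Multiset G} (h : ZeroSumFree S) :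
    IsMinZeroSum ((-S.sum) ::ₘ S) := by
  classical
  refine ⟨cons_ne_zero, by simp, fun U hU hU0 hUS hsum => ?_⟩
  by_cases hmem : -S.sum ∈ U
  · obtain ⟨T, rfl⟩ := exists_cons_of_mem hmem
    have hT : T ≤ S := (cons_le_cons_iff _).1 hU
    have hTsum : T.sum = S.sum := by simpa [neg_add_eq_zero, eq_comm] using hsum
    refine h (S - T) (Multiset.sub_le_self S T) (fun h0 => hUS ?_) ?_
    · rw [le_antisymm (tsub_eq_zero_iff_le.1 h0) hT]
    · have := congrArg sum (add_tsub_cancel_of_le hT)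
      rw [sum_add, hTsum] at this
      exact left_eq_add.1 this.symm
  · exact h U ((le_cons_of_notMem hmem).1 hU) hU0 hsum

theorem ZeroSumFree.card_lt_davenportConstant [Fintype G] {S : Multiset G} (h : ZeroSumFree S) :
    card S < DavenportConstant G := by
  simpa using h.isMinZeroSum_cons_neg_sum.card_le_davenportConstant

end

theorem statement16_general {G : Type*} [AddCommGroup G] [Fintype G]
    (S : Multiset G) (hS : ∀ T ≤ S, T ≠ 0 → T.sum ≠ 0)
    (hcard : Multiset.card S = DavenportConstant G - 1) :
    {g : G | ∃ T ≤ S, T ≠ 0 ∧ T.sum = g} = {g : G | g ≠ 0} := by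
  ext g
  refine ⟨fun ⟨T, hT, hT0, hg⟩ => hg ▸ hS T hT hT0, fun hg => ?_⟩
  by_contra hmiss
  have hfree : ZeroSumFree ((-g) ::ₘ S) := by
    refine zeroSumFree_cons_iff.2 ⟨hS, fun T hT hsum => ?_⟩
    rcases eq_or_ne T 0 with rfl | hT0
    · exact hg (by simpa using hsum)
    · exact hmiss ⟨T, hT, hT0, by rwa [neg_add_eq_zero, eq_comm] at hsum⟩
  have := hfree.card_lt_davenportConstant
  rw [card_cons, hcard] at this
  omega

theorem statement16 {G : Type*} [AddCommGroup G] [Fintype G]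
    (hG : 3 ≤ Fintype.card G)
    (S : Multiset G) (hS : ∀ T ≤ S, T ≠ 0 → T.sum ≠ 0)
    (hcard : Multiset.card S = DavenportConstant G - 1) :
    {g : G | ∃ T ≤ S, T ≠ 0 ∧ T.sum = g} = {g : G | g ≠ 0} :=
  statement16_general S hS hcard
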